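/- Consider the random graph process (G_m)_{m=0}^{N} on vertex set [n], N = C(n,2). Let ε = (log n)^{-2/5} and θ_0 = 5 log log n / log n. Then with high probability, simultaneously for every integer m with (n/2)(log n − log log n) ≤ m ≤ (n/2)(log n + log log n), every real a with 10^{-3} ≤ a ≤ m/(2 n log n), and every set A of edges of G_m with |A| ≥ a n log n, the number of vertices incident to at least one edge of A is at least (2a(1 − θ_0)/(1 + ε))^{1/2} · n. -/

import Mathlib

/-!
Fix a vertex set `S` and let `X_S` count the edges of `G_M` inside `S`, where `M` is the right end
of the window. By switching, a given set of `t` edges lies in `G_M` with probability at most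
`(M / N)^t`, so `E (1 + λ)^{X_S} ≤ exp (λ μ_S)` with `μ_S = M · #(edges in S) / N`, as for a
binomial variable. A violating set `A` of edges forces `X_S ≥ |A| ≥ r_S` for `S = V(A)`, where
`r_S = max (n log n / 1000, |S|² (1 + ε) log n / (2 n (1 - θ₀))) ≥ (1 + ε/2) μ_S`. Chernoff gives
`P(X_S ≥ r_S) ≤ exp (-ε² r_S / 24) ≤ exp (-n (log n)^{1/5} / 24000)`, which survives a union
bound over the `2^n` sets `S`.
-/

/-- The edges of the complete graph `K_n` on vertex set `Fin n`. -/
abbrev EdgeKn (n : ℕ) := {e : Sym2 (Fin n) // ¬ e.IsDiag}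

/-- An ordering of the edges of `K_n`: a bijection from `Fin (n.choose 2)` to the
edge set of `K_n`.  A uniformly random such bijection models the random graph
process `G_0 ⊂ G_1 ⊂ ⋯ ⊂ G_N` on `[n]`. -/
abbrev EOrd (n : ℕ) := Fin (n.choose 2) ≃ EdgeKn n

open scoped Classical in
/-- Probability of an event under the uniform distribution on a finite sample space. -/
noncomputable def prob {Ω : Type*} [Fintype Ω] (p : Ω → Prop) : ℝ :=
  (Finset.univ.filter fun ω => p ω).card / Fintype.card Ω

/-- The graph `G_m` of the process: the graph on `Fin n` formed by the first `m`
edges of the ordering `ω`. -/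
def graphUpTo {n : ℕ} (ω : EOrd n) (m : ℕ) : SimpleGraph (Fin n) :=
  SimpleGraph.fromEdgeSet {e | ∃ i : Fin (n.choose 2), (i : ℕ) < m ∧ (ω i).1 = e}

/-- `e_m(S)`: the number of edges of `G_m` with both endpoints in `S`. -/
noncomputable def eIn {n : ℕ} (ω : EOrd n) (m : ℕ) (S : Finset (Fin n)) : ℕ :=
  Set.ncard {i : Fin (n.choose 2) | (i : ℕ) < m ∧ ∀ v ∈ (ω i).1, v ∈ S}

/-- `m` lies in the interval `[(n/2)(log n − log log n), (n/2)(log n + log log n)]`. -/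
def mInRange (n m : ℕ) : Prop :=
  (n : ℝ) / 2 * (Real.log n - Real.log (Real.log n)) ≤ m ∧
    (m : ℝ) ≤ (n : ℝ) / 2 * (Real.log n + Real.log (Real.log n))

open Finset Real Filter

section Placement

variable {ι β : Type*} [Fintype ι] [DecidableEq ι] [Fintype β] [DecidableEq β]

def placements (P : Finset ι) (T : Finset β) : Finset (ι ≃ β) :=
  {σ | ∀ f ∈ T, σ.symm f ∈ P}

def placedCount (P : Finset ι) (F : Finset β) (σ : ι ≃ β) : ℕ :=
  #{f ∈ F | σ.symm f ∈ P}

/-- Switching: `(σ, i) ↦ (σ ∘ swap (σ⁻¹ b) i, σ⁻¹ b)` is injective, and moves `b` to the arbitrary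
position `i` while keeping `T` inside `P`. -/
lemma card_placements_insert_mul_le (P : Finset ι) (T : Finset β) {b : β} (hb : b ∉ T) :
    #(placements P (insert b T)) * Fintype.card ι ≤ #(placements P T) * #P := by
  rw [← card_univ, ← card_product, ← card_product]
  refine card_le_card_of_injOn (fun p ↦ ((Equiv.swap (p.1.symm b) p.2).trans p.1, p.1.symm b))
    ?_ ?_
  · rintro ⟨σ, i⟩ hσ
    simp only [placements, coe_product, Set.mem_prod, mem_coe, mem_filter, mem_univ, true_and,
      forall_mem_insert] at hσ ⊢
    refine ⟨fun f hf ↦ ?_, hσ.1.1⟩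
    have hfb : σ.symm f ≠ σ.symm b := σ.symm.injective.ne (ne_of_mem_of_not_mem hf hb)
    rw [Equiv.symm_trans_apply, Equiv.symm_swap, Equiv.swap_apply_def, if_neg hfb]
    split_ifs
    exacts [hσ.1.1, hσ.1.2 f hf]
  · rintro ⟨σ, i⟩ - ⟨σ', i'⟩ - h
    simp only [Prod.mk.injEq] at h
    have hi : i = i' := by
      simpa [Equiv.symm_trans_apply] using congrArg (fun τ : ι ≃ β ↦ τ.symm b) h.1
    subst hi
    rw [← h.2] at h
    exact Prod.ext (Equiv.ext fun x ↦ by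
      simpa using congrArg (fun τ : ι ≃ β ↦ τ (Equiv.swap (σ.symm b) i x)) h.1) rfl

lemma card_placements_mul_pow_le (P : Finset ι) (T : Finset β) :
    #(placements P T) * Fintype.card ι ^ #T ≤ Fintype.card (ι ≃ β) * #P ^ #T := by
  induction T using Finset.induction_on with
  | empty => simpa using card_le_univ _
  | insert b T hb ih =>
    rw [card_insert_of_notMem hb, pow_succ, pow_succ]
    calc #(placements P (insert b T)) * (Fintype.card ι ^ #T * Fintype.card ι)
        = #(placements P (insert b T)) * Fintype.card ι * Fintype.card ι ^ #T := by ring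
      _ ≤ #(placements P T) * #P * Fintype.card ι ^ #T :=
        Nat.mul_le_mul_right _ (card_placements_insert_mul_le P T hb)
      _ = #(placements P T) * Fintype.card ι ^ #T * #P := by ring
      _ ≤ Fintype.card (ι ≃ β) * #P ^ #T * #P := by gcongr
      _ = _ := by ring

lemma card_placements_le [Nonempty ι] (P : Finset ι) (T : Finset β) :
    (#(placements P T) : ℝ) ≤ Fintype.card (ι ≃ β) * (#P / Fintype.card ι) ^ #T := by
  rw [div_pow, mul_div_assoc', le_div_iff₀ (by positivity)]
  exact_mod_cast card_placements_mul_pow_le P T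

lemma one_add_pow_placedCount (P : Finset ι) (F : Finset β) (σ : ι ≃ β) (t : ℝ) :
    (1 + t) ^ placedCount P F σ =
      ∑ T ∈ F.powerset, if σ ∈ placements P T then t ^ #T else 0 := by
  rw [placedCount, add_comm, ← sum_pow_mul_eq_add_pow, ← sum_filter]
  simp only [one_pow, mul_one]
  refine sum_congr (ext fun T ↦ ?_) fun _ _ ↦ rfl
  simp only [placements, mem_filter, mem_powerset, mem_univ, true_and, subset_iff]
  exact ⟨fun h ↦ ⟨fun f hf ↦ (h hf).1, fun f hf ↦ (h hf).2⟩, fun h f hf ↦ ⟨h.1 hf, h.2 f hf⟩⟩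

lemma sum_one_add_pow_placedCount_le [Nonempty ι] (P : Finset ι) (F : Finset β) {t : ℝ}
    (ht : 0 ≤ t) :
    ∑ σ : ι ≃ β, (1 + t) ^ placedCount P F σ ≤
      Fintype.card (ι ≃ β) * exp (t * (#P * #F / Fintype.card ι)) := by
  calc ∑ σ : ι ≃ β, (1 + t) ^ placedCount P F σ
      = ∑ T ∈ F.powerset, t ^ #T * #(placements P T) := by
        simp_rw [one_add_pow_placedCount]
        rw [sum_comm]
        refine sum_congr rfl fun T _ ↦ ?_
        rw [← sum_filter, sum_const, nsmul_eq_mul, mul_comm, filter_univ_mem]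
    _ ≤ ∑ T ∈ F.powerset, t ^ #T * (Fintype.card (ι ≃ β) * (#P / Fintype.card ι) ^ #T) := by
        gcongr with T
        exact card_placements_le P T
    _ = Fintype.card (ι ≃ β) * (t * (#P / Fintype.card ι) + 1) ^ #F := by
        rw [← sum_pow_mul_eq_add_pow, mul_sum]
        refine sum_congr rfl fun T _ ↦ ?_
        rw [one_pow, mul_one, mul_pow]
        ring
    _ ≤ Fintype.card (ι ≃ β) * exp (t * (#P * #F / Fintype.card ι)) := by
        gcongr
        calc (t * (#P / Fintype.card ι) + 1) ^ #F ≤ exp (t * (#P / Fintype.card ι)) ^ #F := by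
              gcongr; exact add_one_le_exp _
          _ = _ := by rw [← exp_nat_mul]; ring_nf

lemma exp_mul_log_le_one_add_pow {t r : ℝ} {k : ℕ} (ht : 0 ≤ t) (hrk : r ≤ k) :
    exp (r * log (1 + t)) ≤ (1 + t) ^ k := by
  rw [← exp_log (by linarith : 0 < 1 + t), ← exp_nat_mul, exp_log (by linarith)]
  gcongr
  exact log_nonneg (by linarith)

/-- Chernoff bound for a uniformly random bijection `σ`: `placedCount P F σ` has mean
`#P * #F / card ι`, and exceeds any `r ≥ (1 + t) * mean` with probability at most
`exp (-t² r / 6)`. -/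
lemma card_le_placedCount_le [Nonempty ι] (P : Finset ι) (F : Finset β) {t r : ℝ} (ht0 : 0 ≤ t)
    (ht1 : t ≤ 1) (hr : (1 + t) * (#P * #F / Fintype.card ι) ≤ r) :
    (#{σ : ι ≃ β | r ≤ placedCount P F σ} : ℝ) ≤
      Fintype.card (ι ≃ β) * exp (-(t ^ 2 * r / 6)) := by
  set μ : ℝ := #P * #F / Fintype.card ι
  have hr0 : 0 ≤ r := (mul_nonneg (by linarith) (by positivity)).trans hr
  have hexponent : t * μ - r * log (1 + t) ≤ -(t ^ 2 * r / 6) := by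
    have hlog : 2 * t / (t + 2) ≤ log (1 + t) := le_log_one_add_of_nonneg ht0
    have hμ : t * μ ≤ t * r / (1 + t) := by
      rw [le_div_iff₀ (by linarith)]; nlinarith
    have hgap : t * r / (1 + t) - r * (2 * t / (t + 2)) ≤ -(t ^ 2 * r / 6) := by
      rw [div_sub' (by linarith), div_le_iff₀ (by linarith)]
      field_simp
      nlinarith [mul_nonneg (mul_nonneg hr0 (sq_nonneg t)) (by linarith : 0 ≤ 1 - t)]
    nlinarith [mul_le_mul_of_nonneg_left hlog hr0]
  have hmarkov : (#{σ : ι ≃ β | r ≤ placedCount P F σ} : ℝ) * exp (r * log (1 + t)) ≤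
      Fintype.card (ι ≃ β) * exp (t * μ) := by
    calc (#{σ : ι ≃ β | r ≤ placedCount P F σ} : ℝ) * exp (r * log (1 + t))
        = ∑ σ ∈ {σ : ι ≃ β | r ≤ placedCount P F σ}, exp (r * log (1 + t)) := by
          rw [sum_const, nsmul_eq_mul]
      _ ≤ ∑ σ ∈ {σ : ι ≃ β | r ≤ placedCount P F σ}, (1 + t) ^ placedCount P F σ :=
          sum_le_sum fun σ hσ ↦ exp_mul_log_le_one_add_pow ht0 (mem_filter.1 hσ).2
      _ ≤ ∑ σ : ι ≃ β, (1 + t) ^ placedCount P F σ :=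
          sum_le_sum_of_subset_of_nonneg (subset_univ _) fun _ _ _ ↦ by positivity
      _ ≤ _ := sum_one_add_pow_placedCount_le P F ht0
  rw [← le_div_iff₀ (exp_pos _), mul_div_assoc, ← exp_sub] at hmarkov
  exact hmarkov.trans (by gcongr)

end Placement

lemma card_le_placedCount {ι β : Type*} [DecidableEq ι] {P : Finset ι} {F : Finset β}
    {σ : ι ≃ β} {A : Finset ι} (hAP : A ⊆ P) (hAF : ∀ i ∈ A, σ i ∈ F) : #A ≤ placedCount P F σ :=
  card_le_card_of_injOn σ (fun i hi ↦ mem_filter.2 ⟨hAF i hi, by simpa using hAP hi⟩)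
    σ.injective.injOn

def firstPositions {N : ℕ} (M : ℕ) : Finset (Fin N) := {i | (i : ℕ) < M}

def edgesWithin {n : ℕ} (S : Finset (Fin n)) : Finset (EdgeKn n) := {e | e.1 ∈ S.sym2}

lemma card_firstPositions_le {N : ℕ} (M : ℕ) : #(firstPositions (N := N) M) ≤ M :=
  Fin.card_filter_val_lt.trans_le (min_le_right _ _)

lemma card_edgesWithin_le {n : ℕ} (S : Finset (Fin n)) : #(edgesWithin S) ≤ (#S).choose 2 := by
  rw [← Sym2.card_image_offDiag, ← Sym2.filter_image_mk_not_isDiag, ← sym2_eq_image]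
  refine card_le_card_of_injOn Subtype.val (fun e he ↦ ?_) Subtype.val_injective.injOn
  simp only [edgesWithin, mem_coe, mem_filter, mem_univ, true_and] at he ⊢
  exact ⟨he, e.2⟩

lemma card_le_placedCount_edgesWithin_le {n M : ℕ} (hn : 2 ≤ n) (S : Finset (Fin n))
    {ε θ L r : ℝ} (hε0 : 0 ≤ ε) (hε1 : ε ≤ 1) (hnε : 4 ≤ n * ε) (hθ : θ < 1)
    (hM : 2 * M * (1 - θ) ≤ n * L) (hr : #S ^ 2 * (1 + ε) * L / (2 * n * (1 - θ)) ≤ r) :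
    (#{ω : EOrd n | r ≤ placedCount (firstPositions M) (edgesWithin S) ω} : ℝ) ≤
      Fintype.card (EOrd n) * exp (-(ε ^ 2 * r / 24)) := by
  have : Nonempty (Fin (n.choose 2)) := ⟨⟨0, Nat.choose_pos hn⟩⟩
  have hnR : (2 : ℝ) ≤ n := by exact_mod_cast hn
  have hP : (#(firstPositions (N := n.choose 2) M) : ℝ) ≤ M := by
    exact_mod_cast card_firstPositions_le M
  have hF : (#(edgesWithin S) : ℝ) ≤ #S ^ 2 / 2 := by
    have h := Nat.cast_le (α := ℝ) |>.2 (card_edgesWithin_le S)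
    rw [Nat.cast_choose_two] at h
    nlinarith [(#S).cast_nonneg (α := ℝ)]
  have hL : 0 ≤ L := by nlinarith
  have hmean : (1 + ε / 2) * (#(firstPositions (N := n.choose 2) M) * #(edgesWithin S) /
      Fintype.card (Fin (n.choose 2))) ≤ r := by
    refine le_trans ?_ hr
    rw [Fintype.card_fin, Nat.cast_choose_two, mul_div_assoc', div_le_div_iff₀ (by nlinarith)
      (by nlinarith)]
    have hθ' : 0 ≤ 2 * (n : ℝ) * (1 - θ) := by nlinarith
    have hgrowth : (1 + ε / 2) * n ≤ (1 + ε) * (n - 1) := by nlinarith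
    calc (1 + ε / 2) * (#(firstPositions (N := n.choose 2) M) * #(edgesWithin S) : ℝ) *
          (2 * n * (1 - θ))
        ≤ (1 + ε / 2) * (M * (#S ^ 2 / 2)) * (2 * n * (1 - θ)) := by gcongr
      _ = (1 + ε / 2) * n * #S ^ 2 / 2 * (2 * M * (1 - θ)) := by ring
      _ ≤ (1 + ε / 2) * n * #S ^ 2 / 2 * (n * L) := by gcongr
      _ = ((1 + ε / 2) * n) * (#S ^ 2 * L * n / 2) := by ring
      _ ≤ ((1 + ε) * (n - 1)) * (#S ^ 2 * L * n / 2) := by gcongr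
      _ = _ := by ring
  convert card_le_placedCount_le _ _ (by linarith) (by linarith) hmean using 3
  ring

open scoped Classical in
lemma one_sub_le_prob {Ω : Type*} [Fintype Ω] [Nonempty Ω] (p : Ω → Prop) {δ : ℝ}
    (h : (#{ω | ¬ p ω} : ℝ) ≤ Fintype.card Ω * δ) : 1 - δ ≤ prob p := by
  classical
  have hsplit := card_filter_add_card_filter_not (s := univ) (p := p)
  rw [card_univ] at hsplit
  have hΩ : (0 : ℝ) < Fintype.card Ω := by exact_mod_cast Fintype.card_pos
  rw [prob, le_div_iff₀ hΩ]
  have hcast : (#{ω | p ω} : ℝ) + #{ω | ¬ p ω} = Fintype.card Ω := by exact_mod_cast hsplit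
  convert (by linarith : (1 - δ) * Fintype.card Ω ≤ #{ω | p ω}) using 3

lemma prob_le_one {Ω : Type*} [Fintype Ω] (p : Ω → Prop) : prob p ≤ 1 := by
  classical
  rw [prob]
  exact div_le_one_of_le₀ (by exact_mod_cast card_le_univ _) (Nat.cast_nonneg _)

instance (n : ℕ) : Nonempty (EOrd n) :=
  ⟨(Fintype.equivFinOfCardEq (by rw [Sym2.card_subtype_not_diag, Fintype.card_fin])).symm⟩

noncomputable def eps (n : ℕ) : ℝ := log n ^ (-(2 : ℝ) / 5)

noncomputable def theta0 (n : ℕ) : ℝ := 5 * log (log n) / log n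

noncomputable def windowEnd (n : ℕ) : ℕ := ⌊(n : ℝ) / 2 * (log n + log (log n))⌋₊

def CoversManyVertices (n : ℕ) (ω : EOrd n) : Prop :=
  ∀ m : ℕ, mInRange n m → ∀ a : ℝ, (1 / 1000 : ℝ) ≤ a → a ≤ m / (2 * n * log n) →
    ∀ A : Finset (Fin (n.choose 2)), (∀ i ∈ A, (i : ℕ) < m) → a * n * log n ≤ #A →
      √(2 * a * (1 - theta0 n) / (1 + eps n)) * n ≤ Set.ncard {v : Fin n | ∃ i ∈ A, v ∈ (ω i).1}

lemma exists_placedCount_of_not_coversManyVertices {n : ℕ} {ω : EOrd n}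
    (h : ¬ CoversManyVertices n ω) :
    ∃ a : ℝ, ∃ S : Finset (Fin n), 1 / 1000 ≤ a ∧
      a * n * log n ≤ placedCount (firstPositions (windowEnd n)) (edgesWithin S) ω ∧
      (#S : ℝ) < √(2 * a * (1 - theta0 n) / (1 + eps n)) * n := by
  classical
  simp only [CoversManyVertices, not_forall, not_le] at h
  obtain ⟨m, hm, a, ha, -, A, hAm, hA, hcover⟩ := h
  refine ⟨a, ({v | ∃ i ∈ A, v ∈ (ω i).1} : Finset (Fin n)), ha,
    hA.trans (Nat.cast_le.2 (card_le_placedCount ?_ ?_)),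
    by simpa [← Set.ncard_coe_finset] using hcover⟩
  · intro i hi
    exact mem_filter.2 ⟨mem_univ _, (hAm i hi).trans_le (Nat.le_floor hm.2)⟩
  · intro i hi
    simpa [edgesWithin, mem_sym2_iff] using fun v hv ↦ ⟨i, hi, hv⟩

lemma div_le_of_lt_sqrt_mul {a ε θ L n s x : ℝ} (hε : 0 ≤ ε) (hθ : θ < 1) (hn : 0 < n)
    (hL : 0 ≤ L) (hs : 0 ≤ s) (hsn : s < √(2 * a * (1 - θ) / (1 + ε)) * n) (hx : a * n * L ≤ x) :
    s ^ 2 * (1 + ε) * L / (2 * n * (1 - θ)) ≤ x := by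
  have hsq : s ^ 2 * (1 + ε) < 2 * a * (1 - θ) * n ^ 2 := by
    have h := (lt_sqrt (div_nonneg hs hn.le)).1 ((div_lt_iff₀ hn).2 hsn)
    rw [div_pow, div_lt_div_iff₀ (by positivity) (by linarith)] at h
    linarith
  rw [div_le_iff₀ (by nlinarith)]
  nlinarith [mul_le_mul_of_nonneg_right hsq.le hL,
    mul_le_mul_of_nonneg_left hx (by nlinarith : 0 ≤ 2 * n * (1 - θ))]

section Parameters

variable {n : ℕ}

lemma eps_nonneg : 0 ≤ eps n := rpow_nonneg (log_natCast_nonneg n) _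

lemma eps_le_one (hL : 1 ≤ log n) : eps n ≤ 1 :=
  rpow_le_one_of_one_le_of_nonpos hL (by norm_num)

lemma four_le_mul_eps (hL : 1 ≤ log n) (hn : 4 * log n ≤ n) : 4 ≤ n * eps n := by
  have hinv : (log n)⁻¹ ≤ eps n := by
    rw [← rpow_neg_one]
    exact rpow_le_rpow_of_exponent_le hL (by norm_num)
  have h : 4 ≤ n * (log n)⁻¹ := by
    rw [← div_eq_mul_inv, le_div_iff₀ (by linarith)]
    exact hn
  exact h.trans (by gcongr)

lemma theta0_le_half (hL : 1 ≤ log n) (hLL : 10 * log (log n) ≤ log n) : theta0 n ≤ 1 / 2 := by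
  rw [theta0, div_le_iff₀ (by linarith)]
  linarith

lemma two_mul_windowEnd_mul_le (hL : 1 ≤ log n) (hLL : 10 * log (log n) ≤ log n) :
    2 * windowEnd n * (1 - theta0 n) ≤ n * log n := by
  have hLL0 : 0 ≤ log (log n) := log_nonneg hL
  have hθ := theta0_le_half hL hLL
  have hM : (windowEnd n : ℝ) ≤ n / 2 * (log n + log (log n)) :=
    Nat.floor_le (by positivity)
  have hwindow : (log n + log (log n)) * (1 - theta0 n) ≤ log n := by
    rw [theta0, mul_one_sub, mul_div_assoc', sub_le_iff_le_add, ← sub_le_iff_le_add',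
      le_div_iff₀ (by linarith)]
    nlinarith
  calc 2 * (windowEnd n : ℝ) * (1 - theta0 n) ≤ 2 * (n / 2 * (log n + log (log n))) *
        (1 - theta0 n) := by gcongr; linarith
    _ = n * ((log n + log (log n)) * (1 - theta0 n)) := by ring
    _ ≤ n * log n := by gcongr

lemma eps_sq_mul_log (hL : 0 < log n) : eps n ^ 2 * log n = log n ^ (1 / 5 : ℝ) := by
  rw [eps, ← rpow_natCast, ← rpow_mul hL.le, ← rpow_add_one hL.ne']
  norm_num

end Parameters

open scoped Classical in
lemma card_not_coversManyVertices_le {n : ℕ} (hn : 2 ≤ n) (hL : 1 ≤ log n)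
    (hnL : 4 * log n ≤ n) (hLL : 10 * log (log n) ≤ log n)
    (hbig : 48000 ≤ log n ^ (1 / 5 : ℝ)) :
    (#{ω : EOrd n | ¬ CoversManyVertices n ω} : ℝ) ≤ Fintype.card (EOrd n) * exp (-n) := by
  have hn0 : (0 : ℝ) < n := by positivity
  have hθ : theta0 n < 1 := (theta0_le_half hL hLL).trans_lt (by norm_num)
  let r (S : Finset (Fin n)) : ℝ :=
    max (n * log n / 1000) (#S ^ 2 * (1 + eps n) * log n / (2 * n * (1 - theta0 n)))
  let bad (S : Finset (Fin n)) : Finset (EOrd n) :=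
    {ω | r S ≤ placedCount (firstPositions (windowEnd n)) (edgesWithin S) ω}
  have hcover : ({ω | ¬ CoversManyVertices n ω} : Finset (EOrd n)) ⊆ univ.biUnion bad := by
    intro ω hω
    obtain ⟨a, S, ha, hX, hS⟩ := exists_placedCount_of_not_coversManyVertices (mem_filter.1 hω).2
    refine mem_biUnion.2 ⟨S, mem_univ _, mem_filter.2 ⟨mem_univ _, max_le ?_ ?_⟩⟩
    · refine le_trans ?_ hX
      have : 0 ≤ n * log n := by positivity
      nlinarith
    · exact div_le_of_lt_sqrt_mul eps_nonneg hθ hn0 (by linarith) (by positivity) hS hX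
  have hbad (S : Finset (Fin n)) :
      (#(bad S) : ℝ) ≤ Fintype.card (EOrd n) * exp (-(n * log n ^ (1 / 5 : ℝ) / 24000)) := by
    refine (card_le_placedCount_edgesWithin_le hn S eps_nonneg (eps_le_one hL)
      (four_le_mul_eps hL hnL) hθ (two_mul_windowEnd_mul_le hL hLL) (le_max_right _ _)).trans ?_
    refine mul_le_mul_of_nonneg_left (exp_le_exp.2 ?_) (Nat.cast_nonneg _)
    rw [← eps_sq_mul_log (by linarith)]
    nlinarith [le_max_left (n * log n / 1000) (#S ^ 2 * (1 + eps n) * log n /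
      (2 * n * (1 - theta0 n))), sq_nonneg (eps n)]
  have htwo_pow : (2 : ℝ) ^ n ≤ exp n := by
    rw [← exp_one_pow]
    gcongr
    linarith [add_one_le_exp 1]
  calc (#{ω : EOrd n | ¬ CoversManyVertices n ω} : ℝ)
      ≤ ∑ S : Finset (Fin n), (#(bad S) : ℝ) := by
        exact_mod_cast (card_le_card hcover).trans card_biUnion_le
    _ ≤ 2 ^ n * (Fintype.card (EOrd n) * exp (-(n * log n ^ (1 / 5 : ℝ) / 24000))) := by
        simpa using sum_le_sum fun S (_ : S ∈ univ) ↦ hbad S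
    _ ≤ exp n * (Fintype.card (EOrd n) * exp (-(2 * n))) := by
        gcongr
        nlinarith
    _ = Fintype.card (EOrd n) * exp (-n) := by
        rw [mul_left_comm, ← exp_add]
        ring_nf

lemma eventually_mul_log_le (k : ℝ) (hk : 0 < k) : ∀ᶠ x : ℝ in atTop, k * log x ≤ x := by
  filter_upwards [isLittleO_log_id_atTop.bound (inv_pos.2 hk), eventually_ge_atTop 1]
    with x hx hx1
  rw [norm_of_nonneg (log_nonneg hx1), id, norm_of_nonneg (by linarith)] at hx
  calc k * log x ≤ k * (k⁻¹ * x) := by gcongr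
    _ = x := by field_simp

/-- **Lemma 4(a).** With `ε = (log n)^{-2/5}` and `θ₀ = 5 log log n / log n`, w.h.p.,
simultaneously for all `m` in the connectivity window, all reals `a` with
`(1 / 1000 : ℝ) ≤ a ≤ m/(2n log n)`, and all sets `A` of edges of `G_m` with `|A| ≥ a n log n`,
at least `(2a(1 − θ₀)/(1 + ε))^{1/2}·n` vertices are incident to an edge of `A`. -/
theorem many_vertices_covered :
    Filter.Tendsto
      (fun n : ℕ =>
        prob (Ω := EOrd n) (fun ω =>
          ∀ m : ℕ, mInRange n m →
            ∀ a : ℝ, (1 / 1000 : ℝ) ≤ a → a ≤ m / (2 * n * Real.log n) →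
              ∀ A : Finset (Fin (n.choose 2)),
                (∀ i ∈ A, (i : ℕ) < m) →
                a * n * Real.log n ≤ A.card →
                  Real.sqrt (2 * a * (1 - 5 * Real.log (Real.log n) / Real.log n) /
                      (1 + Real.log n ^ (-(2 : ℝ) / 5))) * n ≤
                    Set.ncard {v : Fin n | ∃ i ∈ A, v ∈ (ω i).1}))
      Filter.atTop (nhds 1) := by
  have hlog : Tendsto (fun n : ℕ ↦ log n) atTop atTop :=
    tendsto_log_atTop.comp tendsto_natCast_atTop_atTop
  have hlower : ∀ᶠ n : ℕ in atTop, 1 - exp (-n) ≤ prob (CoversManyVertices n) := by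
    filter_upwards [eventually_ge_atTop 2, hlog.eventually_ge_atTop 1,
      tendsto_natCast_atTop_atTop.eventually (eventually_mul_log_le 4 (by norm_num)),
      hlog.eventually (eventually_mul_log_le 10 (by norm_num)),
      ((tendsto_rpow_atTop (by norm_num : (0 : ℝ) < 1 / 5)).comp hlog).eventually_ge_atTop 48000]
      with n hn hL hnL hLL hbig
    exact one_sub_le_prob _ (card_not_coversManyVertices_le hn hL hnL hLL hbig)
  have hexp : Tendsto (fun n : ℕ ↦ 1 - exp (-n)) atTop (nhds 1) := by
    simpa using tendsto_const_nhds.sub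
      (tendsto_exp_neg_atTop_nhds_zero.comp tendsto_natCast_atTop_atTop)
  exact tendsto_of_tendsto_of_tendsto_of_le_of_le' hexp tendsto_const_nhds hlower
    (.of_forall fun n ↦ prob_le_one _)
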